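/- Let r > 0, let m ≥ 1 be an integer, and let I be an interval with |I| = L. Suppose a set C ∩ I has N connected components where 2^{m-1} ≤ N ≤ 2^{m+2} and the largest gap satisfies |w_max| = m·2^{m-1}·r with L ≥ 2|w_max| and L ≥ 2r. If additionally the distance between the largest and second-largest gaps intersecting I is at least L/8 and at most L, then (1/8)·(L/r)/log₂(L/r) ≤ N ≤ 16·(L/r)/log₂(L/r), where log₂(R) := max(log base 2 of R, 1). -/

import Mathlib

/-- Truncated base-2 logarithm: log(R) = max(log₂ R, 1). -/
noncomputable def tlog (R : ℝ) : ℝ := max (Real.logb 2 R) 1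

/-- arithmetic core of the component-counting estimate.  Here N is the
number of connected components of C ∩ I, |I| = L, the largest gap has size
|w_max| = m·2^{m-1}·r with L ≥ 2|w_max| and L ≥ 2r, and the distance between the
largest and second-largest gaps is at least L/8 and at most L (encoded via
L/8 ≤ m·2^{m-1}·r ≤ L). -/
theorem stmt_9 (r L : ℝ) (m N : ℕ) (hr : 0 < r) (hm : 1 ≤ m)
    (hN1 : (2 : ℝ) ^ (m - 1) ≤ N) (hN2 : (N : ℝ) ≤ 2 ^ (m + 2))
    (hw1 : L ≥ 2 * ((m : ℝ) * 2 ^ (m - 1) * r)) (hw2 : L ≥ 2 * r)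
    (hd1 : L / 8 ≤ (m : ℝ) * 2 ^ (m - 1) * r) (hd2 : (m : ℝ) * 2 ^ (m - 1) * r ≤ L) :
    1 / 8 * ((L / r) / tlog (L / r)) ≤ (N : ℝ) ∧
    (N : ℝ) ≤ 16 * ((L / r) / tlog (L / r)) := by
  set x := L / r with hxdef
  have hm1 : (1 : ℝ) ≤ (m : ℝ) := by exact_mod_cast hm
  have hpow : ((2:ℝ)) ^ (m - 1) * 2 = 2 ^ m := by
    rw [← pow_succ]; congr 1; omega
  have hple : (m : ℝ) ≤ 2 ^ (m - 1) := by
    have h1 : m - 1 < 2 ^ (m - 1) := Nat.lt_two_pow_self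
    have h2 : m ≤ 2 ^ (m - 1) := by omega
    exact_mod_cast h2
  have hp0 : (0:ℝ) < 2 ^ (m-1) := by positivity
  have hL : 0 < L := lt_of_lt_of_le (by linarith) hw2
  have hx0 : 0 < x := div_pos hL hr
  have hxlo : (m : ℝ) * 2 ^ m ≤ x := by
    rw [hxdef, le_div_iff₀ hr]; nlinarith
  have hxhi : x ≤ 8 * ((m : ℝ) * 2 ^ (m - 1)) := by
    rw [hxdef, div_le_iff₀ hr]; nlinarith
  have hx1 : (2:ℝ) ^ m ≤ x := le_trans (by nlinarith) hxlo
  have hx2 : x ≤ 2 ^ (2 * m + 1) := by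
    have : (8:ℝ) * ((m:ℝ) * 2 ^ (m-1)) ≤ 8 * (2 ^ (m-1) * 2 ^ (m-1)) := by nlinarith
    have h8 : (8:ℝ) * (2 ^ (m-1) * 2 ^ (m-1)) = 2 ^ (2*m+1) := by
      rw [← pow_add]
      have : (8:ℝ) = 2 ^ 3 := by norm_num
      rw [this, ← pow_add]
      congr 1; omega
    linarith [hxhi]
  have hlog_lo : (m : ℝ) ≤ Real.logb 2 x := by
    rw [Real.le_logb_iff_rpow_le one_lt_two hx0]
    rw [Real.rpow_natCast]; exact hx1
  have hlog_hi : Real.logb 2 x ≤ 2 * (m:ℝ) + 1 := by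
    rw [Real.logb_le_iff_le_rpow one_lt_two hx0]
    calc x ≤ 2 ^ (2*m+1) := hx2
    _ = (2:ℝ) ^ ((2*(m:ℝ)+1)) := by
        rw [← Real.rpow_natCast 2 (2*m+1)]; norm_num
  have ht_lo : (m : ℝ) ≤ tlog x := le_trans hlog_lo (le_max_left _ _)
  have ht_hi : tlog x ≤ 2 * (m:ℝ) + 1 := max_le hlog_hi (by linarith)
  have ht1 : (1:ℝ) ≤ tlog x := le_max_right _ _
  have ht0 : (0:ℝ) < tlog x := by linarith
  have hm0 : (0:ℝ) < (m:ℝ) := by linarith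
  constructor
  · have h1 : x / tlog x ≤ x / m := by
      gcongr
    have h2 : x / (m:ℝ) ≤ 8 * 2 ^ (m-1) := by
      rw [div_le_iff₀ hm0]; nlinarith
    calc 1/8 * (x / tlog x) ≤ 1/8 * (8 * 2 ^ (m-1)) := by linarith
    _ = 2 ^ (m-1) := by ring
    _ ≤ (N:ℝ) := hN1
  · have hden : (0:ℝ) < 2*(m:ℝ)+1 := by linarith
    have h1 : x / (2*(m:ℝ)+1) ≤ x / tlog x := by
      gcongr
    have e : (2:ℝ)^(m+2) = 4 * 2^m := by rw [pow_add]; ring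
    have h2 : (2:ℝ)^(m+2) ≤ 16 * (x / (2*(m:ℝ)+1)) := by
      rw [mul_div_assoc', le_div_iff₀ hden]
      nlinarith [pow_pos (by norm_num : (0:ℝ)<2) m]
    calc (N:ℝ) ≤ 2^(m+2) := hN2
    _ ≤ 16 * (x / (2*(m:ℝ)+1)) := h2
    _ ≤ 16 * (x / tlog x) := by linarith
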